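/- arXiv:1707.03575 — 3 statements merged into one kernel-verified Lean document; each statement's English description precedes it below -/
import Mathlib

section
/- (Lemma 1.) Fix x* > 0 and t₁ > 0, and let u : [0,x*] → ℝ be continuous. Then for all t, t̂ ∈ [t₁, τ*_u], |Υ^u(t) − Υ^u(t̂)| ≤ A_u·|t − t̂|, where A_u = (x*/t₁)·exp(2‖u‖). -/
/-
Since `F_u` is increasing, `W_u` is convex with `W_u(0) = 0`. Hence `W_u(p) ≤ p·F_u(p)`, and
`W_u(q) - W_u(p) ≥ (q - p)·F_u(p)` for `q ≥ p`. If `W_u(p) ≥ t₁` and `p ≤ x*`, the first bound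
gives `F_u(p) ≥ t₁/x*`, so the second says that `W_u` grows with slope at least `t₁/x*` from `p`
on. Inverting, `Υ^u` is `(x*/t₁)`-Lipschitz on `[t₁, τ*_u]`, and `exp(2‖u‖) ≥ 1`.
-/

open Set

noncomputable def Fu (xs : ℝ) (h : 0 ≤ xs) (u : C(Icc (0:ℝ) xs, ℝ)) (x : ℝ) : ℝ :=
  ∫ z in (0:ℝ)..x, Real.exp (-(u (projIcc 0 xs h z)))

noncomputable def Wu (xs : ℝ) (h : 0 ≤ xs) (u : C(Icc (0:ℝ) xs, ℝ)) (x : ℝ) : ℝ :=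
  ∫ ξ in (0:ℝ)..x, Fu xs h u ξ

noncomputable def tau (xs : ℝ) (h : 0 ≤ xs) (u : C(Icc (0:ℝ) xs, ℝ)) : ℝ :=
  Wu xs h u xs

section MonotoneIntegrand

variable {F : ℝ → ℝ}

theorem integral_le_mul_of_monotone (hF : Monotone F) {p : ℝ} (hp : 0 ≤ p) :
    ∫ x in (0:ℝ)..p, F x ≤ p * F p :=
  calc ∫ x in (0:ℝ)..p, F x ≤ ∫ _ in (0:ℝ)..p, F p :=
        intervalIntegral.integral_mono_on hp hF.intervalIntegrable intervalIntegrable_const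
          fun _ hx => hF hx.2
    _ = p * F p := by simp

theorem mul_le_integral_of_monotone (hF : Monotone F) {p q : ℝ} (hpq : p ≤ q) :
    (q - p) * F p ≤ ∫ x in p..q, F x :=
  calc (q - p) * F p = ∫ _ in p..q, F p := by simp
    _ ≤ ∫ x in p..q, F x :=
        intervalIntegral.integral_mono_on hpq intervalIntegrable_const hF.intervalIntegrable
          fun _ hx => hF hx.1

theorem sub_le_div_mul_integral_sub_of_monotone (hF : Monotone F) {p q L t : ℝ}
    (hp : 0 ≤ p) (hpL : p ≤ L) (hpq : p ≤ q) (ht : 0 < t) (htp : t ≤ ∫ x in (0:ℝ)..p, F x) :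
    q - p ≤ L / t * ((∫ x in (0:ℝ)..q, F x) - ∫ x in (0:ℝ)..p, F x) := by
  have hpF : t ≤ p * F p := htp.trans (integral_le_mul_of_monotone hF hp)
  have hFp : 0 < F p := pos_of_mul_pos_right (ht.trans_le hpF) hp
  have hLF : t ≤ L * F p := hpF.trans (mul_le_mul_of_nonneg_right hpL hFp.le)
  have hslope : (q - p) * F p ≤ (∫ x in (0:ℝ)..q, F x) - ∫ x in (0:ℝ)..p, F x := by
    rw [intervalIntegral.integral_interval_sub_left hF.intervalIntegrable hF.intervalIntegrable]
    exact mul_le_integral_of_monotone hF hpq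
  rw [div_mul_eq_mul_div, le_div_iff₀ ht]
  calc (q - p) * t ≤ (q - p) * (L * F p) := mul_le_mul_of_nonneg_left hLF (sub_nonneg.2 hpq)
    _ = L * ((q - p) * F p) := by ring
    _ ≤ L * ((∫ x in (0:ℝ)..q, F x) - ∫ x in (0:ℝ)..p, F x) :=
        mul_le_mul_of_nonneg_left hslope (hp.trans hpL)

theorem abs_sub_le_div_mul_abs_integral_sub_of_monotone (hF : Monotone F) {p q L t : ℝ}
    (hp : p ∈ Icc 0 L) (hq : q ∈ Icc 0 L) (ht : 0 < t)
    (htp : t ≤ ∫ x in (0:ℝ)..p, F x) (htq : t ≤ ∫ x in (0:ℝ)..q, F x) :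
    |p - q| ≤ L / t * |(∫ x in (0:ℝ)..p, F x) - ∫ x in (0:ℝ)..q, F x| := by
  wlog hpq : p ≤ q generalizing p q
  · rw [abs_sub_comm, abs_sub_comm (∫ x in (0:ℝ)..p, F x)]
    exact this hq hp htq htp (le_of_not_ge hpq)
  rw [abs_sub_comm, abs_of_nonneg (sub_nonneg.2 hpq), abs_sub_comm]
  exact (sub_le_div_mul_integral_sub_of_monotone hF hp.1 hp.2 hpq ht htp).trans
    (mul_le_mul_of_nonneg_left (le_abs_self _) (div_nonneg (hp.1.trans hp.2) ht.le))

end MonotoneIntegrand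

theorem Fu_monotone (xs : ℝ) (h : 0 ≤ xs) (u : C(Icc (0:ℝ) xs, ℝ)) : Monotone (Fu xs h u) := by
  have hint (a b : ℝ) : IntervalIntegrable (fun z => Real.exp (-(u (projIcc 0 xs h z))))
      MeasureTheory.volume a b :=
    Continuous.intervalIntegrable (by fun_prop) a b
  intro p q hpq
  rw [← sub_nonneg, Fu, Fu, intervalIntegral.integral_interval_sub_left (hint 0 q) (hint 0 p)]
  exact intervalIntegral.integral_nonneg hpq fun _ _ => (Real.exp_pos _).le

/-- Lemma 1: for all `t, t̂ ∈ [t₁, τ*_u]`,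
`|Υ^u(t) - Υ^u(t̂)| ≤ A_u·|t - t̂|` with `A_u = (x*/t₁)·exp(2‖u‖)`. -/
theorem stmt_7 (xs : ℝ) (hxs : 0 < xs) (t₁ : ℝ) (ht₁ : 0 < t₁)
    (u : C(Icc (0:ℝ) xs, ℝ)) (Υ : ℝ → ℝ)
    (hΥ : ∀ s ∈ Icc (0:ℝ) (tau xs hxs.le u), Υ s ∈ Icc 0 xs ∧ Wu xs hxs.le u (Υ s) = s) :
    ∀ t ∈ Icc t₁ (tau xs hxs.le u), ∀ t' ∈ Icc t₁ (tau xs hxs.le u),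
      |Υ t - Υ t'| ≤ xs / t₁ * Real.exp (2 * ‖u‖) * |t - t'| := by
  intro t ht t' ht'
  obtain ⟨hΥt, hWt⟩ := hΥ t ⟨ht₁.le.trans ht.1, ht.2⟩
  obtain ⟨hΥt', hWt'⟩ := hΥ t' ⟨ht₁.le.trans ht'.1, ht'.2⟩
  rw [Wu] at hWt hWt'
  have hLip : |Υ t - Υ t'| ≤ xs / t₁ * |t - t'| := by
    simpa only [hWt, hWt'] using abs_sub_le_div_mul_abs_integral_sub_of_monotone
      (Fu_monotone xs hxs.le u) hΥt hΥt' ht₁ (hWt.symm ▸ ht.1) (hWt'.symm ▸ ht'.1)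
  calc |Υ t - Υ t'| ≤ xs / t₁ * |t - t'| := hLip
    _ ≤ xs / t₁ * Real.exp (2 * ‖u‖) * |t - t'| := by
      gcongr
      exact le_mul_of_one_le_right (div_nonneg hxs.le ht₁.le) (Real.one_le_exp (by positivity))
end

section
/- (Lemma 2, filling time estimate.) Fix x* > 0 and let u, v : [0,x*] → ℝ be continuous. Then |τ*_u − τ*_v| ≤ (1/2)·(x*)²·M_{u,v}·‖u − v‖, where M_{u,v} = exp(max(‖u‖,‖v‖)). -/
open Set

/-! The integrand `exp (-u)` of `F_u` is Lipschitz in `u` with constant `M_{u,v}`, so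
`|F_u x - F_v x| ≤ M_{u,v} ‖u - v‖ x`; integrating this linear bound over `[0, x*]` gives the
factor `x*² / 2`. -/

open Real

theorem Real.abs_exp_sub_exp_le (s t : ℝ) : |exp s - exp t| ≤ exp (max s t) * |s - t| := by
  wlog hts : t ≤ s generalizing s t
  · rw [abs_sub_comm, max_comm, abs_sub_comm s t]
    exact this t s (le_of_not_ge hts)
  rw [abs_of_nonneg (sub_nonneg.2 (exp_le_exp.2 hts)), abs_of_nonneg (sub_nonneg.2 hts),
    max_eq_left hts]
  have h_tangent := add_one_le_exp (t - s)
  have h_factor : exp s * exp (t - s) = exp t := by rw [← exp_add, add_sub_cancel]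
  nlinarith [exp_pos s]

theorem ContinuousMap.abs_exp_neg_sub_exp_neg_le {X : Type*} [TopologicalSpace X]
    [CompactSpace X] (u v : C(X, ℝ)) (p : X) :
    |exp (-u p) - exp (-v p)| ≤ exp (max ‖u‖ ‖v‖) * ‖u - v‖ := by
  have h_max : max (-u p) (-v p) ≤ max ‖u‖ ‖v‖ :=
    max_le_max ((neg_le_abs _).trans (u.norm_coe_le_norm p))
      ((neg_le_abs _).trans (v.norm_coe_le_norm p))
  have h_diff : |-u p - -v p| ≤ ‖u - v‖ := by
    rw [neg_sub_neg, abs_sub_comm]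
    exact (u - v).norm_coe_le_norm p
  calc |exp (-u p) - exp (-v p)| ≤ exp (max (-u p) (-v p)) * |-u p - -v p| :=
        abs_exp_sub_exp_le _ _
    _ ≤ exp (max ‖u‖ ‖v‖) * ‖u - v‖ :=
        mul_le_mul (exp_le_exp.2 h_max) h_diff (abs_nonneg _) (exp_pos _).le

theorem abs_intervalIntegral_le_of_abs_le_mul_self {f : ℝ → ℝ} {a K : ℝ} (ha : 0 ≤ a)
    (hf : ∀ x ∈ Ioc 0 a, |f x| ≤ K * x) : |∫ x in (0:ℝ)..a, f x| ≤ K * a ^ 2 / 2 := by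
  calc |∫ x in (0:ℝ)..a, f x| ≤ ∫ x in (0:ℝ)..a, K * x :=
        intervalIntegral.norm_integral_le_of_norm_le (f := f) ha (.of_forall hf)
          ((continuous_const.mul continuous_id).intervalIntegrable _ _)
    _ = K * a ^ 2 / 2 := by
        rw [intervalIntegral.integral_const_mul, integral_id]
        ring

section FillingTime

variable (xs : ℝ) (h : 0 ≤ xs)

theorem continuous_exp_neg_comp_projIcc (u : C(Icc (0:ℝ) xs, ℝ)) :
    Continuous fun z => exp (-(u (projIcc 0 xs h z))) := by
  fun_prop

theorem continuous_Fu (u : C(Icc (0:ℝ) xs, ℝ)) : Continuous (Fu xs h u) :=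
  intervalIntegral.continuous_primitive
    (fun _ _ => (continuous_exp_neg_comp_projIcc xs h u).intervalIntegrable _ _) 0

theorem abs_Fu_sub_Fu_le (u v : C(Icc (0:ℝ) xs, ℝ)) (x : ℝ) :
    |Fu xs h u x - Fu xs h v x| ≤ exp (max ‖u‖ ‖v‖) * ‖u - v‖ * |x| := by
  rw [Fu, Fu, ← intervalIntegral.integral_sub
    ((continuous_exp_neg_comp_projIcc xs h u).intervalIntegrable _ _)
    ((continuous_exp_neg_comp_projIcc xs h v).intervalIntegrable _ _)]
  simpa only [Real.norm_eq_abs, sub_zero] using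
    intervalIntegral.norm_integral_le_of_norm_le_const (a := 0) (b := x)
    (f := fun z => exp (-(u (projIcc 0 xs h z))) - exp (-(v (projIcc 0 xs h z))))
    fun z _ => u.abs_exp_neg_sub_exp_neg_le v _

theorem tau_sub_tau (u v : C(Icc (0:ℝ) xs, ℝ)) :
    tau xs h u - tau xs h v = ∫ ξ in (0:ℝ)..xs, (Fu xs h u ξ - Fu xs h v ξ) :=
  (intervalIntegral.integral_sub ((continuous_Fu xs h u).intervalIntegrable _ _)
    ((continuous_Fu xs h v).intervalIntegrable _ _)).symm

end FillingTime

/-- Lemma 2, filling time estimate: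
`|τ*_u - τ*_v| ≤ (1/2)·(x*)²·M_{u,v}·‖u - v‖`. -/
theorem stmt_13 (xs : ℝ) (hxs : 0 < xs) (u v : C(Icc (0:ℝ) xs, ℝ)) :
    |tau xs hxs.le u - tau xs hxs.le v| ≤
      1 / 2 * xs ^ 2 * Real.exp (max ‖u‖ ‖v‖) * ‖u - v‖ := by
  rw [tau_sub_tau]
  calc _ ≤ exp (max ‖u‖ ‖v‖) * ‖u - v‖ * xs ^ 2 / 2 :=
        abs_intervalIntegral_le_of_abs_le_mul_self hxs.le fun ξ hξ => by
          simpa only [abs_of_pos hξ.1] using abs_Fu_sub_Fu_le xs hxs.le u v ξ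
    _ = 1 / 2 * xs ^ 2 * exp (max ‖u‖ ‖v‖) * ‖u - v‖ := by ring
end

section
/- (Theorem 1, front component.) Fix x* > 0 and a fixed observation time t > 0. Then the map u ↦ Υ^u(min(t, τ*_u)), from the space C([0,x*], ℝ) of continuous real-valued functions on [0,x*] equipped with the supremum metric to ℝ, is continuous. -/
/-!
Evaluation `C([0,x*]) × [0,x*] → ℝ` is jointly continuous, so the integrand, its primitive `F_u`
and the primitive `W_u` of that depend jointly continuously on `(u, x)`; in particular
`u ↦ min t τ*_u` is continuous. The front is the unique root in the compact interval `[0,x*]`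
of `W_u x = min t τ*_u` (as `W_u' = F_u > 0`), and a unique root in a compact set of an equation
depending continuously on a parameter depends continuously on it.
-/

open Set

/-- The moving front `Υ^u = W_u⁻¹`: since `W_u` is continuous and strictly increasing
on `[0,x*]`, for `t ∈ [0,τ*_u]` the set below is a singleton and `front` is its element. -/
noncomputable def front (xs : ℝ) (h : 0 ≤ xs) (u : C(Icc (0:ℝ) xs, ℝ)) (t : ℝ) : ℝ :=
  sInf {x : ℝ | x ∈ Icc 0 xs ∧ Wu xs h u x = t}

open Filter Topology Function

lemma Set.InjOn.csInf_setOf_eq {α β : Type*} [ConditionallyCompleteLattice α] {f : α → β}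
    {S : Set α} (hf : InjOn f S) {x : α} (hx : x ∈ S) :
    sInf {y | y ∈ S ∧ f y = f x} = x := by
  have hset : {y | y ∈ S ∧ f y = f x} = {x} :=
    Subset.antisymm (fun y hy => hf hy.1 hx hy.2) (singleton_subset_iff.2 ⟨hx, rfl⟩)
  rw [hset, csInf_singleton]

/-- Every cluster point of `g` at `u₀` lies in `K` and solves the limit equation
`W u₀ y = s u₀`, so it is `g u₀`. -/
theorem continuous_of_injOn_of_isCompact {X Y Z : Type*} [TopologicalSpace X]
    [TopologicalSpace Y] [TopologicalSpace Z] [T2Space Z] {K : Set Y} (hK : IsCompact K)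
    {W : X → Y → Z} (hW : Continuous (uncurry W)) (hinj : ∀ u, InjOn (W u) K)
    {s : X → Z} (hs : Continuous s) {g : X → Y} (hgK : ∀ u, g u ∈ K)
    (hg : ∀ u, W u (g u) = s u) : Continuous g := by
  refine continuous_iff_continuousAt.2 fun u₀ =>
    hK.tendsto_nhds_of_unique_mapClusterPt (Eventually.of_forall hgK) fun y hy hcluster => ?_
  obtain ⟨U, hU, hgy⟩ := mapClusterPt_iff_ultrafilter.1 hcluster
  have hWy : Tendsto (fun u => W u (g u)) U (𝓝 (W u₀ y)) :=
    (hW.tendsto (u₀, y)).comp ((tendsto_id.mono_left hU).prodMk_nhds hgy)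
  rw [funext hg] at hWy
  have hWs : W u₀ y = W u₀ (g u₀) :=
    (tendsto_nhds_unique hWy ((hs.tendsto u₀).mono_left hU)).trans (hg u₀).symm
  exact hinj u₀ hy (hgK u₀) hWs

section FrontMap

variable (xs : ℝ) (h : 0 ≤ xs)

lemma continuous_exp_neg_eval_projIcc :
    Continuous (uncurry fun (u : C(Icc (0:ℝ) xs, ℝ)) z =>
      Real.exp (-(u (projIcc 0 xs h z)))) := by
  fun_prop

lemma continuous_uncurry_Fu : Continuous (uncurry (Fu xs h)) :=
  intervalIntegral.continuous_parametric_primitive_of_continuous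
    (continuous_exp_neg_eval_projIcc xs h)

lemma continuous_uncurry_Wu : Continuous (uncurry (Wu xs h)) :=
  intervalIntegral.continuous_parametric_primitive_of_continuous (continuous_uncurry_Fu xs h)

lemma Fu_pos (u : C(Icc (0:ℝ) xs, ℝ)) {x : ℝ} (hx : 0 < x) : 0 < Fu xs h u x :=
  intervalIntegral.intervalIntegral_pos_of_pos
    (((continuous_exp_neg_eval_projIcc xs h).uncurry_left u).intervalIntegrable 0 x)
    (fun _ => Real.exp_pos _) hx

lemma Wu_zero (u : C(Icc (0:ℝ) xs, ℝ)) : Wu xs h u 0 = 0 :=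
  intervalIntegral.integral_same

lemma Wu_strictMonoOn (u : C(Icc (0:ℝ) xs, ℝ)) : StrictMonoOn (Wu xs h u) (Icc 0 xs) := by
  refine strictMonoOn_of_deriv_pos (convex_Icc 0 xs)
    ((continuous_uncurry_Wu xs h).uncurry_left u).continuousOn fun x hx => ?_
  rw [interior_Icc] at hx
  have hderiv : deriv (Wu xs h u) x = Fu xs h u x :=
    ((continuous_uncurry_Fu xs h).uncurry_left u).deriv_integral _ 0 x
  exact hderiv ▸ Fu_pos xs h u hx.1

lemma tau_nonneg (u : C(Icc (0:ℝ) xs, ℝ)) : 0 ≤ tau xs h u :=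
  Wu_zero xs h u ▸ (Wu_strictMonoOn xs h u).monotoneOn (left_mem_Icc.2 h) (right_mem_Icc.2 h) h

lemma front_spec (u : C(Icc (0:ℝ) xs, ℝ)) {s : ℝ} (hs : s ∈ Icc 0 (tau xs h u)) :
    front xs h u s ∈ Icc 0 xs ∧ Wu xs h u (front xs h u s) = s := by
  obtain ⟨x, hx, rfl⟩ : s ∈ Wu xs h u '' Icc 0 xs :=
    intermediate_value_Icc h ((continuous_uncurry_Wu xs h).uncurry_left u).continuousOn
      (by rwa [Wu_zero])
  rw [front, (Wu_strictMonoOn xs h u).injOn.csInf_setOf_eq hx]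
  exact ⟨hx, rfl⟩

end FrontMap

/-- Theorem 1, front component: for a fixed observation time `t > 0`,
the map `u ↦ Υ^u(min(t, τ*_u))` is continuous on `C([0,x*], ℝ)` with the sup metric. -/
theorem stmt_15 (xs : ℝ) (hxs : 0 < xs) (t : ℝ) (ht : 0 < t) :
    Continuous fun u : C(Icc (0:ℝ) xs, ℝ) =>
      front xs hxs.le u (min t (tau xs hxs.le u)) := by
  have hW := continuous_uncurry_Wu xs hxs.le
  have htau : Continuous (tau xs hxs.le) := hW.comp (continuous_id.prodMk continuous_const)
  have hspec u := front_spec xs hxs.le u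
    ⟨le_min ht.le (tau_nonneg xs hxs.le u), min_le_right t _⟩
  exact continuous_of_injOn_of_isCompact isCompact_Icc hW
    (fun u => (Wu_strictMonoOn xs hxs.le u).injOn) (continuous_const.min htau)
    (fun u => (hspec u).1) (fun u => (hspec u).2)
end
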